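/- Let X be a separable topological space, T a discrete space, Y = αT the Alexandroff (one-point) compactification of T, and f : X × Y → ℝ a separately continuous function. Then the pair of extremal sections (∧_f, ∨_f) is a stable pair of Hahn on X. -/

import Mathlib

/-!
For a continuous `g` on `αT`, the values `g t` with `t ∈ T` converge to `g ∞` along the cofinite
filter, so `g t = g ∞` for all but countably many `t`. Applying this to the sections `f (x, ·)`
with `x` in a countable dense set `D`, every `t` outside a countable set has `f (·, t) = f (·, ∞)`
on `D`, hence everywhere. So `f` has only countably many sections `f (·, y)`; enumerating them
gives continuous `u n`, and for each `x` the values `u n x` exhaust the compact set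
`f (x, αT)`, which contains its infimum and supremum.
-/

open Set OnePoint

namespace OnePoint

variable {T Z : Type*} [TopologicalSpace T] [DiscreteTopology T] [TopologicalSpace Z]
  [FirstCountableTopology Z]

lemma countable_setOf_ne_infty [T1Space Z] {g : OnePoint T → Z} (hg : Continuous g) :
    {t : T | g t ≠ g ∞}.Countable := by
  have h := ((continuous_iff_from_discrete g).1 hg).countable_compl_preimage_ker
  rwa [ker_nhds] at h

lemma countable_range_of_separatelyContinuous {X : Type*} [TopologicalSpace X]
    [TopologicalSpace.SeparableSpace X] [T2Space Z] (F : OnePoint T → X → Z)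
    (hF : ∀ y, Continuous (F y)) (hF' : ∀ x, Continuous fun y => F y x) :
    (range F).Countable := by
  obtain ⟨D, hDc, hDd⟩ := TopologicalSpace.exists_countable_dense X
  set E : Set T := ⋃ x ∈ D, {t : T | F t x ≠ F ∞ x}
  have hE : E.Countable := hDc.biUnion fun x _ => countable_setOf_ne_infty (hF' x)
  have h_off : ∀ t ∉ E, F t = F ∞ := fun t ht =>
    Continuous.ext_on hDd (hF t) (hF ∞) fun x hx => by
      by_contra h
      exact ht (mem_biUnion hx h)
  refine ((hE.image (F ∘ (↑))).insert (F ∞)).mono ?_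
  rintro _ ⟨y, rfl⟩
  induction y using OnePoint.rec with
  | infty => exact mem_insert _ _
  | coe t =>
    by_cases ht : t ∈ E
    · exact mem_insert_of_mem _ ⟨t, ht, rfl⟩
    · rw [h_off t ht]
      exact mem_insert _ _

end OnePoint

/-- A pair `(g, h)` of real-valued functions on `X` is a *stable pair of Hahn*
if there is a sequence of continuous functions `u n` such that for every `x`,
`g x = min_n (u n x)` and `h x = max_n (u n x)` (the infimum and supremum are attained). -/
def StablePairOfHahn {X : Type*} [TopologicalSpace X] (g h : X → ℝ) : Prop :=
  ∃ u : ℕ → X → ℝ, (∀ n, Continuous (u n)) ∧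
    ∀ x, IsLeast (Set.range fun n => u n x) (g x) ∧
      IsGreatest (Set.range fun n => u n x) (h x)

theorem stmt8 {X T : Type*} [TopologicalSpace X] [TopologicalSpace.SeparableSpace X]
    [TopologicalSpace T] [DiscreteTopology T]
    (f : X × OnePoint T → ℝ)
    (hf1 : ∀ x : X, Continuous fun y : OnePoint T => f (x, y))
    (hf2 : ∀ y : OnePoint T, Continuous fun x : X => f (x, y)) :
    StablePairOfHahn (fun x => ⨅ y : OnePoint T, f (x, y))
      (fun x => ⨆ y : OnePoint T, f (x, y)) := by
  set F : OnePoint T → X → ℝ := fun y x => f (x, y)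
  obtain ⟨u, hu⟩ :=
    (countable_range_of_separatelyContinuous F hf2 hf1).exists_eq_range (range_nonempty F)
  have h_values : ∀ x, range (fun n => u n x) = range fun y => f (x, y) := fun x => by
    rw [show (fun n => u n x) = (fun g : X → ℝ => g x) ∘ u from rfl, range_comp, ← hu,
      ← range_comp]
    rfl
  refine ⟨u, fun n => ?_, fun x => ?_⟩
  · obtain ⟨y, hy⟩ : u n ∈ range F := hu ▸ mem_range_self n
    exact hy ▸ hf2 y
  · rw [h_values x]
    have hK := isCompact_range (hf1 x)
    exact ⟨hK.isLeast_sInf (range_nonempty _), hK.isGreatest_sSup (range_nonempty _)⟩
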